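/- Fix a, b ∈ ℝ and define H(x) = x³ + a x + b and F(x) = (x⁴ − 2 a x² − 8 b x + a²) / (4 (x³ + a x + b)). If x₁, x₂, …, x_p is a period-p orbit of F (i.e., F(x_n) = x_{n+1} for 1 ≤ n ≤ p−1 and F(x_p) = x₁) with H(x_n) ≠ 0 for all n, then the multiplier λ = ∏_{n=1}^p F'(x_n) satisfies λ² = 4^p, i.e., |λ| = 2^p. -/

import Mathlib

/-!
The cubic `H` transforms under the tangent map by `H (F x) = F'(x)² / 4 · H x`, so each step of
an orbit multiplies `H` by `F'(xₙ)² / 4`. Around a periodic orbit the values of `H` come back to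
themselves, and since they are nonzero the product of these factors, `λ² / 4 ^ p`, equals `1`.
-/

open Finset

section Orbit

variable {α : Type*} {f : α → α} {x : ℕ → α} {p : ℕ}

theorem prod_range_comp_eq_of_periodic_orbit {M : Type*} [CommMonoid M] (g : α → M)
    (horb : ∀ n, n + 1 < p → f (x n) = x (n + 1)) (hper : f (x (p - 1)) = x 0) :
    ∏ n ∈ range p, g (f (x n)) = ∏ n ∈ range p, g (x n) := by
  rcases p with _ | q
  · simp
  rw [Nat.add_sub_cancel] at hper
  rw [prod_range_succ, prod_range_succ', hper]
  congr 1
  exact prod_congr rfl fun n hn => by rw [horb n (by simpa using hn)]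

theorem prod_range_eq_one_of_periodic_orbit {G : Type*} [CommGroupWithZero G]
    {g c : α → G} (hg : ∀ n < p, g (f (x n)) = c (x n) * g (x n)) (hg0 : ∀ n < p, g (x n) ≠ 0)
    (horb : ∀ n, n + 1 < p → f (x n) = x (n + 1)) (hper : f (x (p - 1)) = x 0) :
    ∏ n ∈ range p, c (x n) = 1 := by
  have hprod0 : ∏ n ∈ range p, g (x n) ≠ 0 :=
    prod_ne_zero_iff.mpr fun n hn => hg0 n (mem_range.mp hn)
  refine mul_right_cancel₀ hprod0 ?_
  calc (∏ n ∈ range p, c (x n)) * ∏ n ∈ range p, g (x n)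
      = ∏ n ∈ range p, g (f (x n)) := by
        rw [← prod_mul_distrib]
        exact (prod_congr rfl fun n hn => hg n (mem_range.mp hn)).symm
    _ = 1 * ∏ n ∈ range p, g (x n) := by
        rw [one_mul, prod_range_comp_eq_of_periodic_orbit g horb hper]

end Orbit

def weierstrassCubic {R : Type*} [CommRing R] (a b x : R) : R := x ^ 3 + a * x + b

/-- The `x`-coordinate of the point where the tangent to `y² = x³ + a x + b` at `(x, y)` meets
the curve again. -/
def tangentXMap {K : Type*} [Field K] (a b x : K) : K :=
  (x ^ 4 - 2 * a * x ^ 2 - 8 * b * x + a ^ 2) / (4 * weierstrassCubic a b x)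

section TangentMapDeriv

variable {𝕜 : Type*} [NontriviallyNormedField 𝕜] [CharZero 𝕜] {a b : 𝕜}

theorem hasDerivAt_tangentXMap {x : 𝕜} (hx : weierstrassCubic a b x ≠ 0) :
    HasDerivAt (tangentXMap a b)
      (((4 * x ^ 3 - 4 * a * x - 8 * b) * (4 * weierstrassCubic a b x) -
        (x ^ 4 - 2 * a * x ^ 2 - 8 * b * x + a ^ 2) * (4 * (3 * x ^ 2 + a))) /
        (4 * weierstrassCubic a b x) ^ 2) x := by
  have hnum : HasDerivAt (fun y : 𝕜 => y ^ 4 - 2 * a * y ^ 2 - 8 * b * y + a ^ 2)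
      (4 * x ^ 3 - 4 * a * x - 8 * b) x := by
    refine ((((hasDerivAt_pow 4 x).sub ((hasDerivAt_pow 2 x).const_mul (2 * a))).sub
      ((hasDerivAt_id x).const_mul (8 * b))).add_const (a ^ 2)).congr_deriv ?_
    push_cast
    ring
  have hden : HasDerivAt (fun y : 𝕜 => 4 * weierstrassCubic a b y) (4 * (3 * x ^ 2 + a)) x := by
    refine ((((hasDerivAt_pow 3 x).add ((hasDerivAt_id x).const_mul a)).add_const b).const_mul
      (4 : 𝕜)).congr_deriv ?_
    push_cast
    ring
  exact hnum.div hden (mul_ne_zero (by norm_num) hx)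

theorem weierstrassCubic_tangentXMap {x : 𝕜} (hx : weierstrassCubic a b x ≠ 0) :
    weierstrassCubic a b (tangentXMap a b x) =
      deriv (tangentXMap a b) x ^ 2 / 4 * weierstrassCubic a b x := by
  rw [(hasDerivAt_tangentXMap hx).deriv]
  conv_lhs => rw [weierstrassCubic, tangentXMap]
  field_simp
  rw [weierstrassCubic]
  ring

end TangentMapDeriv

theorem elliptic_multiplier_general (a b : ℝ) (H F : ℝ → ℝ)
    (hH : H = fun x => x ^ 3 + a * x + b)
    (hF : F = fun x => (x ^ 4 - 2 * a * x ^ 2 - 8 * b * x + a ^ 2) /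
      (4 * (x ^ 3 + a * x + b)))
    (p : ℕ) (x : ℕ → ℝ)
    (horb : ∀ n, n + 1 < p → F (x n) = x (n + 1))
    (hper : F (x (p - 1)) = x 0)
    (hHne : ∀ n < p, H (x n) ≠ 0) :
    (∏ n ∈ Finset.range p, deriv F (x n)) ^ 2 = 4 ^ p ∧
      |∏ n ∈ Finset.range p, deriv F (x n)| = 2 ^ p := by
  replace hH : H = weierstrassCubic a b := hH
  replace hF : F = tangentXMap a b := hF
  subst hH hF
  have hfactors : ∏ n ∈ range p, deriv (tangentXMap a b) (x n) ^ 2 / 4 = 1 :=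
    prod_range_eq_one_of_periodic_orbit (c := fun y => deriv (tangentXMap a b) y ^ 2 / 4)
      (fun n hn => weierstrassCubic_tangentXMap (hHne n hn)) hHne horb hper
  have hsq : (∏ n ∈ range p, deriv (tangentXMap a b) (x n)) ^ 2 = 4 ^ p := by
    rwa [prod_div_distrib, prod_pow, prod_const, card_range,
      div_eq_one_iff_eq (by positivity)] at hfactors
  refine ⟨hsq, ?_⟩
  rw [← sq_eq_sq₀ (abs_nonneg _) (by positivity), sq_abs, hsq, pow_right_comm]
  norm_num

/-- Every period-`p` orbit of the elliptic-curve tangent map `F`, avoiding the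
zeros of `H(x) = x³ + ax + b`, has multiplier `λ` with `λ² = 4^p`, i.e.
`|λ| = 2^p`. The orbit is indexed as `x 0, …, x (p-1)`. -/
theorem elliptic_multiplier (a b : ℝ) (H F : ℝ → ℝ)
    (hH : H = fun x => x ^ 3 + a * x + b)
    (hF : F = fun x => (x ^ 4 - 2 * a * x ^ 2 - 8 * b * x + a ^ 2) /
      (4 * (x ^ 3 + a * x + b)))
    (p : ℕ) (hp : 1 ≤ p) (x : ℕ → ℝ)
    (horb : ∀ n, n + 1 < p → F (x n) = x (n + 1))
    (hper : F (x (p - 1)) = x 0)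
    (hHne : ∀ n < p, H (x n) ≠ 0) :
    (∏ n ∈ Finset.range p, deriv F (x n)) ^ 2 = 4 ^ p ∧
      |∏ n ∈ Finset.range p, deriv F (x n)| = 2 ^ p :=
  elliptic_multiplier_general a b H F hH hF p x horb hper hHne
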